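/- arXiv:1603.02719 — 2 statements merged into one kernel-verified Lean document; each statement's English description precedes it below -/
import Mathlib

section
/- In any bikei X, (y⊲x)⊲(x⊳y) = y and (x⊳y)⊳(y⊲x) = x for all x, y ∈ X. -/
/-- A bikei: a set with two binary operations `u` (the underline operation `⊳`)
and `o` (the overline operation `⊲`) satisfying the bikei axioms. -/
structure Bikei (X : Type*) where
  u : X → X → X
  o : X → X → X
  ax1 : ∀ x, u x x = o x x
  ax2i : ∀ x y, o (o x y) y = x
  ax2ii : ∀ x y, u (u x y) y = x
  ax2iii : ∀ x y, u x (o y x) = u x y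
  ax2iv : ∀ x y, o x (u y x) = o x y
  ax3i : ∀ x y z, o (o x y) (o x y) = o (o x z) (u y z)
  ax3ii : ∀ x y z, o (u x y) (u x y) = u (o x z) (o y z)
  ax3iii : ∀ x y z, u (u x y) (u z y) = u (u x z) (o y z)

/-- In any bikei, `(y⊲x)⊲(x⊳y) = y` and `(x⊳y)⊳(y⊲x) = x`. -/
theorem stmt_6 {X : Type*} (B : Bikei X) (x y : X) :
    B.o (B.o y x) (B.u x y) = y ∧ B.u (B.u x y) (B.o y x) = x := by
  constructor
  · rw [← B.ax2iii x y, B.ax2iv, B.ax2i]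
  · rw [← B.ax2iv y x, B.ax2iii, B.ax2ii]
end

section
/- Let X be a bikei, A an abelian group, and let C₂^{BD}(X;A) ⊆ C₂(X;A) be the subgroup generated by chains (x,x), (x,y) − (x⊳y, y⊲x), (x,y) + (x, y⊲x), (x,y) + (x⊳y, y), and let C₁^{BD}(X;A) be generated by (x) − (x⊳y) and (x) − (x⊲y). Then ∂₂(C₂^{BD}(X;A)) ⊆ C₁^{BD}(X;A). -/
noncomputable section

variable {X : Type*} {A : Type*} [AddCommGroup A]

/-- The birack boundary `∂₂ : C₂(X;A) → C₁(X;A)`, determined on generators by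
`∂₂(x,y) = (y) - (y⊲x) - (x) + (x⊳y)`. -/
def bnd2 (B : Bikei X) : ((X × X) →₀ A) →+ (X →₀ A) :=
  Finsupp.liftAddHom fun p =>
    Finsupp.singleAddHom p.2 - Finsupp.singleAddHom (B.o p.2 p.1)
      - Finsupp.singleAddHom p.1 + Finsupp.singleAddHom (B.u p.1 p.2)

/-- The bikei degenerate subgroup `C₂^{BD}(X;A)`, generated by the chains
`(x,x)`, `(x,y) - (x⊳y, y⊲x)`, `(x,y) + (x, y⊲x)`, and `(x,y) + (x⊳y, y)`. -/
def BD2 (B : Bikei X) : AddSubgroup ((X × X) →₀ A) :=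
  AddSubgroup.closure
    ({c | ∃ x a, c = Finsupp.single (x, x) a} ∪
     {c | ∃ x y a, c = Finsupp.single (x, y) a - Finsupp.single (B.u x y, B.o y x) a} ∪
     {c | ∃ x y a, c = Finsupp.single (x, y) a + Finsupp.single (x, B.o y x) a} ∪
     {c | ∃ x y a, c = Finsupp.single (x, y) a + Finsupp.single (B.u x y, y) a})

/-- The bikei degenerate subgroup `C₁^{BD}(X;A)`, generated by the chains
`(x) - (x⊳y)` and `(x) - (x⊲y)`. -/
def BD1 (B : Bikei X) : AddSubgroup (X →₀ A) :=
  AddSubgroup.closure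
    ({c | ∃ x y a, c = Finsupp.single x a - Finsupp.single (B.u x y) a} ∪
     {c | ∃ x y a, c = Finsupp.single x a - Finsupp.single (B.o x y) a})


lemma bnd2_single (B : Bikei X) (x y : X) (a : A) :
    bnd2 B (Finsupp.single (x, y) a) =
      Finsupp.single y a - Finsupp.single (B.o y x) a
        - Finsupp.single x a + Finsupp.single (B.u x y) a := by
  simp [bnd2, Finsupp.liftAddHom_apply_single]

lemma mem_BD1_u (B : Bikei X) (x y : X) (a : A) :
    Finsupp.single x a - Finsupp.single (B.u x y) a ∈ BD1 (A := A) B :=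
  AddSubgroup.subset_closure (Or.inl ⟨x, y, a, rfl⟩)

lemma mem_BD1_o (B : Bikei X) (x y : X) (a : A) :
    Finsupp.single x a - Finsupp.single (B.o x y) a ∈ BD1 (A := A) B :=
  AddSubgroup.subset_closure (Or.inr ⟨x, y, a, rfl⟩)

/-- The bikei degenerate groups form a subcomplex in degrees `2 → 1`:
`∂₂(C₂^{BD}(X;A)) ⊆ C₁^{BD}(X;A)`. -/
theorem stmt_19 (B : Bikei X) (c : (X × X) →₀ A) (hc : c ∈ BD2 (A := A) B) :
    bnd2 B c ∈ BD1 (A := A) B := by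
  refine AddSubgroup.closure_induction ?_ (by rw [map_zero]; exact zero_mem _) ?_ ?_ hc
  · rintro s (((⟨x, a, rfl⟩ | ⟨x, y, a, rfl⟩) | ⟨x, y, a, rfl⟩) | ⟨x, y, a, rfl⟩)
    · rw [bnd2_single, B.ax1]
      abel_nf
      exact zero_mem _
    · rw [map_sub, bnd2_single, bnd2_single]
      have h1 : B.o (B.o y x) (B.u x y) = y := by
        rw [← B.ax2iii x y, B.ax2iv, B.ax2i]
      have h2 : B.u (B.u x y) (B.o y x) = x := by
        rw [← B.ax2iv y x, B.ax2iii, B.ax2ii]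
      rw [h1, h2]
      have : Finsupp.single y a - Finsupp.single (B.o y x) a - Finsupp.single x a +
            Finsupp.single (B.u x y) a -
          (Finsupp.single (B.o y x) a - Finsupp.single y a - Finsupp.single (B.u x y) a +
            Finsupp.single x a) =
          ((Finsupp.single y a - Finsupp.single (B.o y x) a) +
           (Finsupp.single y a - Finsupp.single (B.o y x) a)) -
          ((Finsupp.single x a - Finsupp.single (B.u x y) a) +
           (Finsupp.single x a - Finsupp.single (B.u x y) a)) := by abel
      rw [this]
      exact sub_mem (add_mem (mem_BD1_o B y x a) (mem_BD1_o B y x a))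
        (add_mem (mem_BD1_u B x y a) (mem_BD1_u B x y a))
    · rw [map_add, bnd2_single, bnd2_single, B.ax2i, B.ax2iii]
      have : Finsupp.single y a - Finsupp.single (B.o y x) a - Finsupp.single x a +
            Finsupp.single (B.u x y) a +
          (Finsupp.single (B.o y x) a - Finsupp.single y a - Finsupp.single x a +
            Finsupp.single (B.u x y) a) =
          -((Finsupp.single x a - Finsupp.single (B.u x y) a) +
            (Finsupp.single x a - Finsupp.single (B.u x y) a)) := by abel
      rw [this]
      exact neg_mem (add_mem (mem_BD1_u B x y a) (mem_BD1_u B x y a))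
    · rw [map_add, bnd2_single, bnd2_single, B.ax2ii, B.ax2iv]
      have : Finsupp.single y a - Finsupp.single (B.o y x) a - Finsupp.single x a +
            Finsupp.single (B.u x y) a +
          (Finsupp.single y a - Finsupp.single (B.o y x) a - Finsupp.single (B.u x y) a +
            Finsupp.single x a) =
          (Finsupp.single y a - Finsupp.single (B.o y x) a) +
          (Finsupp.single y a - Finsupp.single (B.o y x) a) := by abel
      rw [this]
      exact add_mem (mem_BD1_o B y x a) (mem_BD1_o B y x a)
  · intro x y _ _ hx hy
    rw [map_add]; exact add_mem hx hy
  · intro x _ hx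
    rw [map_neg]; exact neg_mem hx


end
end
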